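/- For a k-labeled graph G₁ and a weighted graph H(α,β) on vertex set [q], define for each map φ: [k] → [q] the value hom_φ(G₁, H) as the weighted homomorphism sum restricted to maps extending φ on the labeled vertices (with vertex weights of labeled vertices counted once). Then for any two k-labeled graphs G₁, G₂ with fully labeled intersection, hom(G₁G₂, H(α,β)) = Σ_{φ: [k]→[q]} hom_φ(G₁,H) · hom_φ(G₂,H) / Π_{i∈[k]} α(φ(i)), assuming all α values are nonzero. In particular the connection matrix C(hom(-,H(α,β)), k) is a Gram matrix of rank at most q^k. -/

import Mathlib

/-- A `k`-labeled graph: a finite graph (possibly with multiple edges, recorded by the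
symmetric, loop-free edge multiplicity function `E`) together with an injective labeling
of `k` of its vertices by labels from `[k]`. -/
structure KGraph (k : ℕ) where
  V : Type
  [fin : Fintype V]
  E : V → V → ℕ
  symmE : ∀ a b, E a b = E b a
  loopfree : ∀ a, E a a = 0
  lab : Fin k → V
  inj : Function.Injective lab

namespace KGraph

variable {k : ℕ}

/-- The vertex set of the `k`-connection of `A` and `B`: all vertices of `A` together
with the unlabeled vertices of `B` (the labeled vertices of `B` get identified with
the equally-labeled vertices of `A`). -/
abbrev GlueV (A B : KGraph k) : Type :=
  A.V ⊕ {b : B.V // ∀ i, b ≠ B.lab i}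

open Classical in
/-- The canonical map from the vertices of `B` into the `k`-connection of `A` and `B`. -/
noncomputable def emb₂ (A B : KGraph k) (b : B.V) : GlueV A B :=
  if h : ∃ i, B.lab i = b then Sum.inl (A.lab (Classical.choose h))
  else Sum.inr ⟨b, fun i hb => h ⟨i, hb.symm⟩⟩

lemma emb₂_inj (A B : KGraph k) : Function.Injective (emb₂ A B) := by
  intro b b' h
  by_cases h1 : ∃ i, B.lab i = b <;> by_cases h2 : ∃ i, B.lab i = b'
  · unfold emb₂ at h
    rw [dif_pos h1, dif_pos h2] at h
    have := A.inj (Sum.inl.inj h)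
    rw [← Classical.choose_spec h1, ← Classical.choose_spec h2, this]
  · unfold emb₂ at h
    rw [dif_pos h1, dif_neg h2] at h
    exact absurd h (by simp)
  · unfold emb₂ at h
    rw [dif_neg h1, dif_pos h2] at h
    exact absurd h (by simp)
  · unfold emb₂ at h
    rw [dif_neg h1, dif_neg h2] at h
    exact congrArg Subtype.val (Sum.inr.inj h)

open Classical in
/-- The edge multiplicity function of the `k`-connection of `A` and `B`:
multiplicities coming from `A` and from `B` add up. -/
noncomputable def glueE (A B : KGraph k) (x y : GlueV A B) : ℕ :=
  letI := B.fin
  (match x, y with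
    | Sum.inl a, Sum.inl a' => A.E a a'
    | _, _ => 0)
  + ∑ b : B.V, ∑ b' : B.V,
      if emb₂ A B b = x ∧ emb₂ A B b' = y then B.E b b' else 0

lemma glueE_symm (A B : KGraph k) (x y : GlueV A B) : glueE A B x y = glueE A B y x := by
  classical
  letI := B.fin
  unfold glueE
  refine congrArg₂ (· + ·) ?_ ?_
  · rcases x with a | a <;> rcases y with a' | a' <;> simp [A.symmE]
  · rw [Finset.sum_comm]
    refine Finset.sum_congr rfl fun b _ => Finset.sum_congr rfl fun b' _ => ?_
    exact if_congr and_comm (B.symmE b' b) rfl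

lemma glueE_loopfree (A B : KGraph k) (x : GlueV A B) : glueE A B x x = 0 := by
  classical
  letI := B.fin
  unfold glueE
  have h1 : (match x, x with
    | Sum.inl a, Sum.inl a' => A.E a a'
    | _, _ => 0) = 0 := by
    rcases x with a | a <;> simp [A.loopfree]
  rw [h1]
  refine Nat.zero_add _ ▸ Finset.sum_eq_zero fun b _ => Finset.sum_eq_zero fun b' _ => ?_
  split_ifs with hb
  · obtain ⟨hb1, hb2⟩ := hb
    have : b = b' := emb₂_inj A B (hb1.trans hb2.symm)
    rw [this, B.loopfree]
  · rfl

/-- The `k`-connection (gluing) of two `k`-labeled graphs: take the disjoint union and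
identify equally-labeled vertices. -/
noncomputable def glue (A B : KGraph k) : KGraph k where
  V := GlueV A B
  fin := by
    have := A.fin; have := B.fin
    classical
    exact inferInstance
  E := glueE A B
  symmE := glueE_symm A B
  loopfree := glueE_loopfree A B
  lab := fun i => Sum.inl (A.lab i)
  inj := fun i j h => A.inj (Sum.inl.inj h)

open Classical in
/-- The partition function `hom(-, H(α,β))` of the weighted graph `H(α,β)` on `q`
vertices with vertex weights `α` and edge weights `β`, evaluated on (the underlying
graph of) a `k`-labeled graph `X`:
`Σ_{t : V(X) → [q]} Π_v α(t v) · Π_{(u,v) ∈ V(X)²} β(t u, t v) ^ E(u,v)`. -/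
noncomputable def Z (q : ℕ) (α : Fin q → ℝ) (β : Matrix (Fin q) (Fin q) ℝ)
    (X : KGraph k) : ℝ :=
  letI := X.fin
  ∑ t : X.V → Fin q,
    (∏ w : X.V, α (t w)) * ∏ p : X.V × X.V, β (t p.1) (t p.2) ^ X.E p.1 p.2

open Classical in
/-- The restricted partition function `hom_φ(X, H(α,β))`: the weighted homomorphism sum
over maps extending `φ` on the labeled vertices. -/
noncomputable def homRestrict (q : ℕ) (α : Fin q → ℝ) (β : Matrix (Fin q) (Fin q) ℝ)
    (X : KGraph k) (φ : Fin k → Fin q) : ℝ :=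
  letI := X.fin
  ∑ t : X.V → Fin q,
    if ∀ i, t (X.lab i) = φ i then
      (∏ w : X.V, α (t w)) * ∏ p : X.V × X.V, β (t p.1) (t p.2) ^ X.E p.1 p.2
    else 0

end KGraph

/-!
A map from the vertices of `G₁G₂` to `[q]` is the same as a pair of maps on `G₁` and `G₂`
that agree on the labeled vertices. Since the edge multiplicities of `G₁G₂` are those of `G₁`
and `G₂` added up, its weight is the product of the weights of the pair, except that the
vertex weights of the `k` shared vertices are counted twice. Grouping the compatible pairs by
their common restriction `φ` to the labels yields the sum over `φ`.
-/

open Finset KGraph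

attribute [local instance] KGraph.fin

theorem Fintype.prod_pow_sum_ite_eq {W V M : Type*} [Fintype W] [Fintype V] [DecidableEq V]
    [CommMonoid M] (e : W → V) (m : W → ℕ) (g : V → M) :
    ∏ v, g v ^ (∑ w, if e w = v then m w else 0) = ∏ w, g (e w) ^ m w := by
  simp_rw [← Finset.sum_filter, ← Finset.prod_pow_eq_pow_sum]
  rw [← Finset.prod_fiberwise univ e]
  exact Finset.prod_congr rfl fun v _ => Finset.prod_congr rfl fun w hw => by
    rw [(Finset.mem_filter.1 hw).2]

theorem Fintype.sum_fiber_mul_sum_fiber {X Y Φ R : Type*} [Fintype X] [Fintype Y] [Fintype Φ]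
    [DecidableEq Φ] [CommSemiring R] (r : X → Φ) (s : Y → Φ) (f : X → R) (g : Y → R)
    (c : Φ → R) :
    ∑ φ, (∑ x, if r x = φ then f x else 0) * (∑ y, if s y = φ then g y else 0) * c φ =
      ∑ x, ∑ y, if s y = r x then f x * g y * c (r x) else 0 := by
  simp_rw [Finset.sum_mul_sum, Finset.sum_mul]
  rw [Finset.sum_comm]
  refine Finset.sum_congr rfl fun x _ => ?_
  rw [Finset.sum_comm]
  refine Finset.sum_congr rfl fun y _ => ?_
  rw [Finset.sum_eq_single (r x)]
  · split_ifs <;> simp_all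
  · intro φ _ hφ
    split_ifs <;> simp_all
  · simp

namespace KGraph

variable {k : ℕ}

def homWeight {V ι R : Type*} [Fintype V] [CommMonoid R] (α : ι → R) (β : Matrix ι ι R)
    (E : V → V → ℕ) (t : V → ι) : R :=
  (∏ v, α (t v)) * ∏ p : V × V, β (t p.1) (t p.2) ^ E p.1 p.2

theorem Z_eq_sum_homWeight (q : ℕ) (α : Fin q → ℝ) (β : Matrix (Fin q) (Fin q) ℝ)
    (X : KGraph k) [DecidableEq X.V] : Z q α β X = ∑ t, homWeight α β X.E t := by
  unfold Z
  congr!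

theorem homRestrict_eq_sum_homWeight (q : ℕ) (α : Fin q → ℝ) (β : Matrix (Fin q) (Fin q) ℝ)
    (X : KGraph k) [DecidableEq X.V] (φ : Fin k → Fin q) :
    homRestrict q α β X φ = ∑ t, if t ∘ X.lab = φ then homWeight α β X.E t else 0 := by
  unfold homRestrict
  simp only [funext_iff, Function.comp_apply]
  congr!

theorem prod_lab_mul_prod_unlab {M : Type*} [CommMonoid M] (B : KGraph k)
    [Fintype {b : B.V // ∀ i, b ≠ B.lab i}] (f : B.V → M) :
    (∏ i, f (B.lab i)) * ∏ b : {b : B.V // ∀ i, b ≠ B.lab i}, f b = ∏ b, f b := by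
  classical
  have hunlab (b : B.V) : (∀ i, b ≠ B.lab i) ↔ b ∉ Set.range B.lab := by simp [eq_comm]
  rw [← Fintype.prod_subtype_mul_prod_subtype (· ∈ Set.range B.lab)]
  congr 1
  · convert Fintype.prod_equiv (Equiv.ofInjective B.lab B.inj) (fun i => f (B.lab i))
      (fun b => f b) fun _ => rfl
  · exact Fintype.prod_equiv (Equiv.subtypeEquivRight hunlab) (fun b => f b) (fun b => f b)
      fun _ => rfl

section glue

variable {ι M : Type*} (A B : KGraph k) {t₁ : A.V → ι} {t₂ : B.V → ι}

theorem emb₂_lab (i : Fin k) : emb₂ A B (B.lab i) = Sum.inl (A.lab i) := by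
  have h : ∃ j, B.lab j = B.lab i := ⟨i, rfl⟩
  rw [emb₂, dif_pos h, B.inj (Classical.choose_spec h)]

theorem emb₂_of_forall_ne {b : B.V} (hb : ∀ i, b ≠ B.lab i) :
    emb₂ A B b = Sum.inr ⟨b, hb⟩ := by
  rw [emb₂, dif_neg fun ⟨i, hi⟩ => hb i hi.symm]

theorem sumElim_emb₂ (h : t₂ ∘ B.lab = t₁ ∘ A.lab) (b : B.V) :
    Sum.elim t₁ (t₂ ∘ Subtype.val) (emb₂ A B b) = t₂ b := by
  by_cases hb : ∀ i, b ≠ B.lab i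
  · rw [emb₂_of_forall_ne A B hb]
    rfl
  · obtain ⟨i, rfl⟩ := not_forall_not.1 hb
    rw [emb₂_lab]
    exact (congrFun h i).symm

noncomputable def glueMapEquiv (ι : Type*) :
    (GlueV A B → ι) ≃ {t : (A.V → ι) × (B.V → ι) // t.2 ∘ B.lab = t.1 ∘ A.lab} where
  toFun t := ⟨(t ∘ Sum.inl, t ∘ emb₂ A B), funext fun i => by simp [emb₂_lab]⟩
  invFun t := Sum.elim t.1.1 (t.1.2 ∘ Subtype.val)
  left_inv t := by
    ext (a | ⟨b, hb⟩)
    · rfl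
    · simp [emb₂_of_forall_ne A B hb]
  right_inv t := Subtype.ext <| Prod.ext rfl <| funext <| sumElim_emb₂ A B t.2

theorem sum_fun_glue [AddCommMonoid M] [Fintype ι] [DecidableEq ι] [DecidableEq A.V]
    [DecidableEq B.V] [DecidableEq (glue A B).V] (F : ((glue A B).V → ι) → M) :
    ∑ t, F t = ∑ t₁ : A.V → ι, ∑ t₂ : B.V → ι,
      if t₂ ∘ B.lab = t₁ ∘ A.lab then F (Sum.elim t₁ (t₂ ∘ Subtype.val)) else 0 := by
  refine (Fintype.sum_equiv (ι := (glue A B).V → ι) (glueMapEquiv A B ι) F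
    (fun t => F ((glueMapEquiv A B ι).symm t))
    fun t => congrArg F ((glueMapEquiv A B ι).symm_apply_apply t).symm).trans ?_
  refine (sum_subtype _ (fun _ => mem_filter_univ _)
    fun t : (A.V → ι) × (B.V → ι) => F (Sum.elim t.1 (t.2 ∘ Subtype.val))).symm.trans ?_
  rw [sum_filter, Fintype.sum_prod_type]

theorem glueE_eq_add [DecidableEq (GlueV A B)] (z : GlueV A B × GlueV A B) :
    glueE A B z.1 z.2 =
      (∑ p : A.V × A.V, if Prod.map Sum.inl Sum.inl p = z then A.E p.1 p.2 else 0) +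
        ∑ p : B.V × B.V, if Prod.map (emb₂ A B) (emb₂ A B) p = z then B.E p.1 p.2 else 0 := by
  classical
  obtain ⟨x, y⟩ := z
  unfold glueE
  rw [Fintype.sum_prod_type, Fintype.sum_prod_type]
  refine congrArg₂ (· + ·) ?_ ?_
  · rcases x with a | s <;> rcases y with a' | s' <;> simp [ite_and]
  · simp only [Prod.map, Prod.mk.injEq]
    congr!

theorem prod_glueV_mul_prod_lab [CommMonoid M] [instGlue : Fintype (GlueV A B)] (f : ι → M)
    (h : t₂ ∘ B.lab = t₁ ∘ A.lab) :
    (∏ w : GlueV A B, f (Sum.elim t₁ (t₂ ∘ Subtype.val) w)) * ∏ i, f (t₁ (A.lab i)) =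
      (∏ a, f (t₁ a)) * ∏ b, f (t₂ b) := by
  classical
  obtain rfl : instGlue = instFintypeSum _ _ := Subsingleton.elim _ _
  rw [Fintype.prod_sum_type, ← prod_lab_mul_prod_unlab B]
  have hlab : ∏ i, f (t₂ (B.lab i)) = ∏ i, f (t₁ (A.lab i)) :=
    prod_congr rfl fun i _ => congrArg f (congrFun h i)
  rw [hlab]
  simp only [Sum.elim_inl, Sum.elim_inr, Function.comp_apply]
  ac_rfl

theorem prod_pow_glueE [CommMonoid M] [Fintype (GlueV A B)] (g : ι → ι → M)
    (h : t₂ ∘ B.lab = t₁ ∘ A.lab) :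
    ∏ z : GlueV A B × GlueV A B,
        g (Sum.elim t₁ (t₂ ∘ Subtype.val) z.1) (Sum.elim t₁ (t₂ ∘ Subtype.val) z.2) ^
          glueE A B z.1 z.2 =
      (∏ p : A.V × A.V, g (t₁ p.1) (t₁ p.2) ^ A.E p.1 p.2) *
        ∏ p : B.V × B.V, g (t₂ p.1) (t₂ p.2) ^ B.E p.1 p.2 := by
  classical
  simp_rw [glueE_eq_add, pow_add, prod_mul_distrib, Fintype.prod_pow_sum_ite_eq]
  simp only [Prod.map_fst, Prod.map_snd, Sum.elim_inl, sumElim_emb₂ A B h]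

theorem homWeight_glue [CommMonoid M] [Fintype (GlueV A B)] (α : ι → M) (β : Matrix ι ι M)
    (h : t₂ ∘ B.lab = t₁ ∘ A.lab) :
    homWeight α β (glueE A B) (Sum.elim t₁ (t₂ ∘ Subtype.val)) * ∏ i, α (t₁ (A.lab i)) =
      homWeight α β A.E t₁ * homWeight α β B.E t₂ := by
  rw [homWeight, mul_right_comm, prod_glueV_mul_prod_lab A B α h, prod_pow_glueE A B β h,
    homWeight, homWeight]
  ac_rfl

end glue

end KGraph

/-- For `k`-labeled graphs `G₁, G₂` (whose gluing has fully labeled intersection: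
in particular no edge occurs between labeled vertices in both graphs), the value of the
partition function on the `k`-connection `G₁G₂` decomposes as a Gram-type sum over the
maps `φ : [k] → V(H)`:
`hom(G₁G₂, H(α,β)) = Σ_φ hom_φ(G₁,H) · hom_φ(G₂,H) / Π_{i∈[k]} α(φ i)`,
provided all vertex weights `α` are nonzero.  In particular the connection matrix
`C(hom(-,H(α,β)), k)` is a Gram matrix of rank at most `q^k`. -/
theorem connection_matrix_gram_decomposition
    (q k : ℕ) (α : Fin q → ℝ) (β : Matrix (Fin q) (Fin q) ℝ)
    (hα : ∀ j, α j ≠ 0) (G₁ G₂ : KGraph k) :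
    KGraph.Z q α β (G₁.glue G₂) =
      ∑ φ : Fin k → Fin q,
        KGraph.homRestrict q α β G₁ φ * KGraph.homRestrict q α β G₂ φ /
          ∏ i : Fin k, α (φ i) := by
  classical
  calc Z q α β (G₁.glue G₂)
      = ∑ t₁ : G₁.V → Fin q, ∑ t₂ : G₂.V → Fin q, if t₂ ∘ G₂.lab = t₁ ∘ G₁.lab then
          homWeight α β (G₁.glue G₂).E (Sum.elim t₁ (t₂ ∘ Subtype.val)) else 0 := by
        rw [Z_eq_sum_homWeight, sum_fun_glue]
    _ = ∑ t₁ : G₁.V → Fin q, ∑ t₂ : G₂.V → Fin q, if t₂ ∘ G₂.lab = t₁ ∘ G₁.lab then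
          homWeight α β G₁.E t₁ * homWeight α β G₂.E t₂ / ∏ i, α (t₁ (G₁.lab i)) else 0 := by
        refine sum_congr rfl fun t₁ _ => sum_congr rfl fun t₂ _ => if_ctx_congr Iff.rfl
          (fun h => eq_div_of_mul_eq ?_ (homWeight_glue G₁ G₂ α β h)) fun _ => rfl
        exact prod_ne_zero_iff.2 fun i _ => hα _
    _ = _ := by
        simp only [homRestrict_eq_sum_homWeight, div_eq_mul_inv, Fintype.sum_fiber_mul_sum_fiber,
          Function.comp_apply]
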